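/- Every Lie algebra with a codimension-one abelian ideal h, such that ad(Y)|_h is not a multiple of the identity for Y ∉ h, admits an inner product having a basis of geodesic elements. -/

import Mathlib

/-!
Choose the inner product with `Y ⊥ H`. Then `Y` is geodesic and, `H` being abelian, `m ∈ H` is
geodesic iff `q m := ⟨m, ad(Y) m⟩` vanishes. Since `A := ad(Y)|_H` is not scalar, some `v ∈ H`
is not an eigenvector; an inner product on `H` with `v ⊥ A v` and `A v` long enough makes `v`
isotropic for `q` with `polar q v ≠ 0`. The isotropic vectors of such a form span `H`, because
`g - (q g / polar q g v) • v` is isotropic whenever `polar q g v ≠ 0`, so a basis of geodesic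
vectors can be picked among `Y` and the isotropic vectors of `q`.
-/

open Module Submodule

structure IsInnerProductForm {V : Type*} [AddCommGroup V] [Module ℝ V]
    (B : V →ₗ[ℝ] V →ₗ[ℝ] ℝ) : Prop where
  symm : ∀ x y, B x y = B y x
  pos : ∀ x, x ≠ 0 → 0 < B x x

namespace IsInnerProductForm

variable {V : Type*} [AddCommGroup V] [Module ℝ V] {B : V →ₗ[ℝ] V →ₗ[ℝ] ℝ}

theorem nonneg (hB : IsInnerProductForm B) (x : V) : 0 ≤ B x x := by
  rcases eq_or_ne x 0 with rfl | hx
  · simp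
  · exact (hB.pos x hx).le

end IsInnerProductForm

section WeightedForm

variable {V ι : Type*} [AddCommGroup V] [Module ℝ V] [Fintype ι]

noncomputable def Module.Basis.weightedForm (b : Basis ι ℝ V) (w : ι → ℝ) : V →ₗ[ℝ] V →ₗ[ℝ] ℝ :=
  ∑ i, w i • (b.coord i).smulRight (b.coord i)

variable (b : Basis ι ℝ V) (w : ι → ℝ)

theorem Module.Basis.weightedForm_apply (x y : V) :
    b.weightedForm w x y = ∑ i, w i * (b.repr x i * b.repr y i) := by
  simp [weightedForm, LinearMap.sum_apply]

theorem Module.Basis.weightedForm_self_apply (i : ι) (y : V) :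
    b.weightedForm w (b i) y = w i * b.repr y i := by
  classical
  simp [weightedForm_apply, Finsupp.single_apply]

theorem Module.Basis.isInnerProductForm_weightedForm (hw : ∀ i, 0 < w i) :
    IsInnerProductForm (b.weightedForm w) where
  symm x y := by simp only [weightedForm_apply, mul_comm (b.repr x _)]
  pos x hx := by
    obtain ⟨i, hi⟩ : ∃ i, b.repr x i ≠ 0 := by
      by_contra! h
      exact hx (b.ext_elem_iff.mpr (by simpa using h))
    rw [weightedForm_apply]
    exact Finset.sum_pos' (fun j _ => mul_nonneg (hw j).le (mul_self_nonneg _))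
      ⟨i, Finset.mem_univ i, mul_pos (hw i) (mul_self_pos.mpr hi)⟩

end WeightedForm

theorem exists_isInnerProductForm (V : Type*) [AddCommGroup V] [Module ℝ V]
    [FiniteDimensional ℝ V] : ∃ B : V →ₗ[ℝ] V →ₗ[ℝ] ℝ, IsInnerProductForm B :=
  ⟨_, (finBasis ℝ V).isInnerProductForm_weightedForm _ fun _ => one_pos⟩

theorem IsInnerProductForm.exists_extension_of_isCompl {V : Type*} [AddCommGroup V]
    [Module ℝ V] {p q : Submodule ℝ V} (hpq : IsCompl p q) [FiniteDimensional ℝ q]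
    {β : p →ₗ[ℝ] p →ₗ[ℝ] ℝ} (hβ : IsInnerProductForm β) :
    ∃ B : V →ₗ[ℝ] V →ₗ[ℝ] ℝ, IsInnerProductForm B ∧
      (∀ x y : p, B x y = β x y) ∧ ∀ (x : q) (y : p), B x y = 0 := by
  obtain ⟨γ, hγ⟩ := exists_isInnerProductForm q
  set π₁ := p.projectionOnto q hpq
  set π₂ := q.projectionOnto p hpq.symm
  have hBapply : ∀ x y, (β.compl₁₂ π₁ π₁ + γ.compl₁₂ π₂ π₂) x y
      = β (π₁ x) (π₁ y) + γ (π₂ x) (π₂ y) := fun _ _ => rfl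
  refine ⟨β.compl₁₂ π₁ π₁ + γ.compl₁₂ π₂ π₂, ⟨fun x y => ?_, fun x hx => ?_⟩,
    fun x y => ?_, fun x y => ?_⟩
  · rw [hBapply, hBapply, hβ.symm, hγ.symm]
  · have hsum : (π₁ x : V) + π₂ x = x := projection_add_projection_eq_self hpq x
    rw [hBapply]
    by_cases h₁ : π₁ x = 0
    · have h₂ : π₂ x ≠ 0 := fun h₂ => hx (by rw [← hsum, h₁, h₂]; simp)
      exact add_pos_of_nonneg_of_pos (hβ.nonneg _) (hγ.pos _ h₂)
    · exact add_pos_of_pos_of_nonneg (hβ.pos _ h₁) (hγ.nonneg _)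
  · simp [π₁, π₂, projectionOnto_apply_left, projectionOnto_apply_right]
  · simp [π₁, π₂, projectionOnto_apply_left, projectionOnto_apply_right]

theorem QuadraticMap.span_setOf_eq_zero_eq_top {K V : Type*} [Field K] [AddCommGroup V]
    [Module K V] (Q : QuadraticForm K V) {v f : V} (hv : Q v = 0) (hf : polar Q v f ≠ 0) :
    span K {x | Q x = 0} = ⊤ := by
  have hv_mem : v ∈ span K {x | Q x = 0} := subset_span hv
  have key : ∀ g, polar Q g v ≠ 0 → g ∈ span K {x | Q x = 0} := by
    intro g hg
    set s := -(Q g / polar Q g v)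
    have hzero : Q (g + s • v) = 0 := by
      have hpolar : polar Q g (s • v) = Q (g + s • v) - Q g - Q (s • v) := rfl
      rw [polar_smul_right, QuadraticMap.map_smul, hv, smul_eq_mul, smul_zero] at hpolar
      have hs : s * polar Q g v = -Q g := by simp only [s]; field_simp
      linear_combination -hpolar + hs
    have hg : g = (g + s • v) - s • v := by abel
    rw [hg]
    exact sub_mem (subset_span hzero) (smul_mem _ _ hv_mem)
  rw [polar_comm] at hf
  refine eq_top_iff.mpr fun x _ => ?_
  by_cases hx : polar Q x v = 0
  · have hxf : polar Q (x + f) v ≠ 0 := by rwa [polar_add_left, hx, zero_add]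
    simpa using sub_mem (key _ hxf) (key _ hf)
  · exact key x hx

theorem LinearIndependent.exists_basis_pair {K V : Type*} [Field K] [AddCommGroup V]
    [Module K V] [FiniteDimensional K V] {x y : V} (h : LinearIndependent K ![x, y]) :
    ∃ (s : Set V) (_ : Fintype s) (b : Basis s K V) (i j : s), i ≠ j ∧ b i = x ∧ b j = y := by
  let b := Basis.extend h.linearIndepOn_id
  refine ⟨_, FiniteDimensional.fintypeBasisIndex b, b,
    ⟨x, h.linearIndepOn_id.subset_extend _ ⟨0, rfl⟩⟩,
    ⟨y, h.linearIndepOn_id.subset_extend _ ⟨1, rfl⟩⟩, fun hxy => ?_,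
    Basis.extend_apply_self _ _, Basis.extend_apply_self _ _⟩
  exact zero_ne_one (h.injective (congrArg Subtype.val hxy))

theorem Module.End.exists_isInnerProductForm_span_isotropic_eq_top {V : Type*}
    [AddCommGroup V] [Module ℝ V] [FiniteDimensional ℝ V] {A : Module.End ℝ V}
    (hA : ∀ c : ℝ, A ≠ c • 1) :
    ∃ β : V →ₗ[ℝ] V →ₗ[ℝ] ℝ, IsInnerProductForm β ∧ span ℝ {x | β x (A x) = 0} = ⊤ := by
  classical
  obtain ⟨v, hli⟩ : ∃ v, LinearIndependent ℝ ![v, A v] := by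
    by_contra! h
    obtain ⟨c, rfl⟩ := LinearMap.exists_eq_smul_id_of_forall_notLinearIndependent h
    exact hA c rfl
  obtain ⟨s, _, b, iv, iw, hne, rfl, hbw⟩ := hli.exists_basis_pair
  -- Weighting `A v` heavily makes the polar form of `x ↦ β x (A x)` nonzero at `(v, A v)`.
  let a := b.repr (A (A (b iv))) iv
  let w : s → ℝ := fun i => if i = iw then 1 + |a| else 1
  have hw : ∀ i, 0 < w i := fun i => by
    dsimp only [w]; split_ifs <;> positivity
  refine ⟨b.weightedForm w, b.isInnerProductForm_weightedForm w hw, ?_⟩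
  let Q := LinearMap.BilinMap.toQuadraticMap ((b.weightedForm w).compl₂ A)
  have hQv : Q (b iv) = 0 := by
    change b.weightedForm w (b iv) (A (b iv)) = 0
    rw [← hbw, b.weightedForm_self_apply, Basis.repr_self, Finsupp.single_apply,
      if_neg hne.symm, mul_zero]
  have hpolar : QuadraticMap.polar Q (b iv) (A (b iv)) ≠ 0 := by
    have h₁ : b.weightedForm w (b iv) (A (A (b iv))) = a := by
      rw [b.weightedForm_self_apply, show w iv = 1 from if_neg hne, one_mul]
    have h₂ : b.weightedForm w (A (b iv)) (A (b iv)) = 1 + |a| := by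
      rw [← hbw, b.weightedForm_self_apply, Basis.repr_self, Finsupp.single_eq_same, mul_one,
        show w iw = 1 + |a| from if_pos rfl]
    rw [LinearMap.BilinMap.polar_toQuadraticMap, LinearMap.compl₂_apply, LinearMap.compl₂_apply,
      h₁, h₂]
    linarith [neg_abs_le a]
  exact Q.span_setOf_eq_zero_eq_top hQv hpolar

theorem Submodule.exists_smul_add_of_span_singleton_sup_eq_top {R M : Type*} [Ring R]
    [AddCommGroup M] [Module R M] {Y : M} {p : Submodule R M} (h : span R {Y} ⊔ p = ⊤)
    (x : M) : ∃ t : R, ∃ k ∈ p, t • Y + k = x := by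
  obtain ⟨y, hy, k, hk, rfl⟩ := mem_sup.mp (h ▸ mem_top : x ∈ span R {Y} ⊔ p)
  obtain ⟨t, rfl⟩ := mem_span_singleton.mp hy
  exact ⟨t, k, hk, rfl⟩

theorem Module.Basis.exists_fin_finrank_forall_mem_of_span_eq_top {K V : Type*} [DivisionRing K]
    [AddCommGroup V] [Module K V] [FiniteDimensional K V] {s : Set V} (hs : span K s = ⊤) :
    ∃ b : Basis (Fin (finrank K V)) K V, ∀ i, b i ∈ s :=
  ⟨(Basis.ofSpan hs.ge).reindex ((Basis.ofSpan hs.ge).indexEquiv (finBasis K V)),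
    fun i => by
      rw [Basis.reindex_apply]
      exact Basis.ofSpan_subset hs.ge ⟨_, rfl⟩⟩

def IsGeodesic {L : Type*} [LieRing L] [Module ℝ L] (B : L →ₗ[ℝ] L →ₗ[ℝ] ℝ) (X : L) : Prop :=
  ∀ W, B X ⁅X, W⁆ = 0

section CodimOneAbelianIdeal

variable {L : Type*} [LieRing L] [LieAlgebra ℝ L] {Y : L} {H : LieIdeal ℝ L}
  (B : L →ₗ[ℝ] L →ₗ[ℝ] ℝ)

theorem isGeodesic_of_forall_mem (hspan : span ℝ {Y} ⊔ H.toSubmodule = ⊤)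
    (hB : ∀ k ∈ H, B Y k = 0) : IsGeodesic B Y := by
  intro W
  obtain ⟨t, k, hk, rfl⟩ := exists_smul_add_of_span_singleton_sup_eq_top hspan W
  rw [lie_add, lie_smul, lie_self, smul_zero, zero_add]
  exact hB _ (H.lie_mem hk)

theorem isGeodesic_of_mem (hspan : span ℝ {Y} ⊔ H.toSubmodule = ⊤)
    (habel : ∀ a ∈ H, ∀ b ∈ H, ⁅a, b⁆ = (0 : L)) {m : L} (hm : m ∈ H)
    (hBm : B m ⁅Y, m⁆ = 0) : IsGeodesic B m := by
  intro W
  obtain ⟨t, k, hk, rfl⟩ := exists_smul_add_of_span_singleton_sup_eq_top hspan W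
  rw [lie_add, lie_smul, habel m hm k hk, add_zero, ← lie_skew, map_smul, map_neg, hBm, neg_zero,
    smul_zero]

end CodimOneAbelianIdeal

/-- A finite-dimensional real Lie algebra with a codimension-one abelian ideal `H`
(complemented by `Y`), such that `ad Y` restricted to `H` is not a multiple of the
identity, admits an inner product having a basis of geodesic elements. -/
theorem geodesic_basis_codim_one_abelian_ideal
    {L : Type*} [LieRing L] [LieAlgebra ℝ L] [Module.Finite ℝ L]
    (Y : L) (H : LieIdeal ℝ L)
    (hY : Y ∉ H)
    (hspan : Submodule.span ℝ {Y} ⊔ H.toSubmodule = ⊤)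
    (habel : ∀ a ∈ H, ∀ b ∈ H, ⁅a, b⁆ = (0 : L))
    (hnotid : ∀ c : ℝ, ∃ W ∈ H, ⁅Y, W⁆ ≠ c • W) :
    ∃ B : L →ₗ[ℝ] L →ₗ[ℝ] ℝ,
      (∀ x y, B x y = B y x) ∧ (∀ x, x ≠ 0 → 0 < B x x) ∧
      ∃ b : Module.Basis (Fin (Module.finrank ℝ L)) ℝ L,
        ∀ i, b i ≠ 0 ∧ ∀ W, B (b i) ⁅b i, W⁆ = 0 := by
  let A := LieModule.toEnd ℝ L H Y
  have hA : ∀ c : ℝ, A ≠ c • 1 := fun c hc => by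
    obtain ⟨W, hW, hne⟩ := hnotid c
    exact hne (by simpa [A] using congrArg (fun f => (f ⟨W, hW⟩ : L)) hc)
  obtain ⟨β, hβ, hβspan⟩ := A.exists_isInnerProductForm_span_isotropic_eq_top hA
  have hcompl : IsCompl H.toSubmodule (span ℝ {Y}) :=
    ⟨disjoint_span_singleton.mpr fun h => absurd h hY, codisjoint_iff.mpr (by rwa [sup_comm])⟩
  obtain ⟨B, hB, hBH, hBY⟩ := hβ.exists_extension_of_isCompl hcompl
  have hAm : ∀ m : H, ⁅Y, (m : L)⁆ = (A m : L) := fun m => by simp [A]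
  have hgeo : span ℝ (insert Y (H.toSubmodule.subtype '' {m : H | β m (A m) = 0})) = ⊤ := by
    rw [span_insert, span_image, hβspan, map_subtype_top, hspan]
  obtain ⟨b, hb⟩ := Basis.exists_fin_finrank_forall_mem_of_span_eq_top hgeo
  refine ⟨B, hB.symm, hB.pos, b, fun i => ⟨b.ne_zero i, ?_⟩⟩
  rcases hb i with h | ⟨m, hm, h⟩
  · rw [h]
    exact isGeodesic_of_forall_mem B hspan fun k hk => hBY ⟨Y, mem_span_singleton_self Y⟩ ⟨k, hk⟩
  · rw [← h, subtype_apply]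
    exact isGeodesic_of_mem B hspan habel m.2 (by rw [hAm, hBH]; exact hm)
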